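/- Let Φ be a strongly continuous one-parameter unitary group on a complex Hilbert space H, let I be a compact interval, let v ∈ C(I, H), and let (α_n) be a sequence of locally integrable real-valued functions on ℝ with α_n ⇀ 1 and |α_n(t)| ≤ ᾱ(t) for a.e. t and all n, where ᾱ is locally integrable. Define τ_n(t,t') = ∫_{t'}^{t} α_n(s) ds. Then Φ(τ_n(t,t'))v(t') converges to Φ(t−t')v(t') uniformly for (t,t') ∈ I × I, i.e. sup_{t,t'∈I} ‖Φ(τ_n(t,t'))v(t') − Φ(t−t')v(t')‖ → 0 as n → ∞. -/

import Mathlib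

/-!
The primitives `x ↦ ∫_a^x αₙ` are equicontinuous, because the domination `|αₙ| ≤ ᾱ` gives them
the common modulus of continuity of the primitive of `ᾱ`, and they converge pointwise to
`x ↦ x - a` by testing `αₙ ⇀ 1` against `θ = 1`. By Ascoli they converge uniformly on `[a, b]`,
hence `τₙ(t, t') - (t - t') → 0` uniformly on `[a, b]²`. As `Φ` is a group of isometries,
`‖Φ(τ) u - Φ(t - t') u‖ = ‖Φ(τ - (t - t')) u - Φ(0) u‖`, and an equicontinuous, strongly
continuous family is uniformly continuous in `s` on the compact set `v([a, b])`.
-/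

open MeasureTheory Filter Set Topology

theorem EquicontinuousOn.tendstoUniformlyOn_of_tendsto {ι X α : Type*} [TopologicalSpace X]
    [UniformSpace α] {F : ι → X → α} {f : X → α} {K : Set X} {l : Filter ι}
    (hF : EquicontinuousOn F K) (hK : IsCompact K)
    (hlim : ∀ x ∈ K, Tendsto (F · x) l (𝓝 (f x))) :
    TendstoUniformlyOn F f l K := by
  have key := (EquicontinuousOn.tendsto_uniformOnFun_iff_pi' (𝔖 := {K})
    (by simpa using hK) (by simpa using hF) l f).mpr (by
      simpa [tendsto_pi_nhds] using fun x hx => hlim x hx)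
  exact UniformOnFun.tendsto_iff_tendstoUniformlyOn.mp key K rfl

theorem ContinuousLinearMap.uniformEquicontinuous_of_norm_apply_le {ι 𝕜 E F : Type*}
    [NontriviallyNormedField 𝕜] [SeminormedAddCommGroup E] [SeminormedAddCommGroup F]
    [NormedSpace 𝕜 E] [NormedSpace 𝕜 F] {T : ι → E →L[𝕜] F} (hT : ∀ i x, ‖T i x‖ ≤ ‖x‖) :
    UniformEquicontinuous fun i => ⇑(T i) :=
  Metric.uniformEquicontinuous_of_continuity_modulus id tendsto_id _ fun x y i => by
    simpa only [dist_eq_norm, ← map_sub, id] using hT i (x - y)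

theorem ContinuousLinearMap.tendstoUniformlyOn_of_norm_apply_le {X 𝕜 E F : Type*}
    [TopologicalSpace X] [NontriviallyNormedField 𝕜] [SeminormedAddCommGroup E] [SeminormedAddCommGroup F]
    [NormedSpace 𝕜 E] [NormedSpace 𝕜 F] {T : X → E →L[𝕜] F} (hT : ∀ x u, ‖T x u‖ ≤ ‖u‖)
    (hcont : ∀ u, Continuous fun x => T x u) (x₀ : X) {K : Set E} (hK : IsCompact K) :
    TendstoUniformlyOn (fun x => ⇑(T x)) (T x₀) (𝓝 x₀) K :=
  (ContinuousLinearMap.uniformEquicontinuous_of_norm_apply_le hT).equicontinuous.equicontinuousOn K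
    |>.tendstoUniformlyOn_of_tendsto hK fun u _ => (hcont u).tendsto x₀

theorem MeasureTheory.LocallyIntegrable.intervalIntegrable {E : Type*} [NormedAddCommGroup E]
    {f : ℝ → E} {μ : Measure ℝ} (hf : LocallyIntegrable f μ) (a b : ℝ) :
    IntervalIntegrable f μ a b :=
  (hf.integrableOn_isCompact isCompact_uIcc).intervalIntegrable

theorem equicontinuous_primitive_of_dominated {ι : Type*} {α : ι → ℝ → ℝ} {ᾱ : ℝ → ℝ}
    (hα : ∀ i, LocallyIntegrable (α i)) (hᾱ : LocallyIntegrable ᾱ)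
    (hdom : ∀ i, ∀ᵐ t, |α i t| ≤ ᾱ t) (a : ℝ) :
    Equicontinuous fun i x => ∫ s in a..x, α i s := by
  intro x₀
  refine Metric.equicontinuousAt_of_continuity_modulus (fun x => |∫ s in x₀..x, ᾱ s|) ?_ _
    (Eventually.of_forall fun x i => ?_)
  · simpa using ((intervalIntegral.continuous_primitive hᾱ.intervalIntegrable x₀).abs.tendsto x₀)
  · rw [dist_comm, dist_eq_norm, intervalIntegral.integral_interval_sub_left
      ((hα i).intervalIntegrable _ _) ((hα i).intervalIntegrable _ _)]
    exact intervalIntegral.norm_integral_le_abs_of_norm_le (ae_restrict_of_ae (hdom i))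
      (hᾱ.intervalIntegrable _ _)

theorem tendstoUniformlyOn_self {ι α β : Type*} [UniformSpace β] (f : α → β) (l : Filter ι)
    (s : Set α) : TendstoUniformlyOn (fun _ => f) f l s :=
  fun _ hu => Eventually.of_forall fun _ _ _ => refl_mem_uniformity hu

theorem tendstoUniformlyOn_integral_sub_of_dominated {ι : Type*} {l : Filter ι}
    {α : ι → ℝ → ℝ} {ᾱ : ℝ → ℝ} (hα : ∀ i, LocallyIntegrable (α i)) (hᾱ : LocallyIntegrable ᾱ)
    (hdom : ∀ i, ∀ᵐ t, |α i t| ≤ ᾱ t) {a : ℝ} {K : Set ℝ} (hK : IsCompact K)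
    (hlim : ∀ x ∈ K, Tendsto (fun i => ∫ s in a..x, α i s) l (𝓝 (x - a))) :
    TendstoUniformlyOn (fun i p => (∫ s in p.2..p.1, α i s) - (p.1 - p.2)) 0 l (K ×ˢ K) := by
  have hprim : TendstoUniformlyOn (fun i x => (∫ s in a..x, α i s) - (x - a)) 0 l K :=
    ((((equicontinuous_primitive_of_dominated hα hᾱ hdom a).equicontinuousOn K
      ).tendstoUniformlyOn_of_tendsto hK hlim).sub
      (tendstoUniformlyOn_self _ _ _)).congr_right fun _ _ => sub_self _
  refine (((hprim.comp Prod.fst).mono fun p hp => hp.1).sub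
    ((hprim.comp Prod.snd).mono fun p hp => hp.2)).congr
    (Eventually.of_forall fun i p _ => ?_) |>.congr_right fun _ _ => sub_self _
  have := intervalIntegral.integral_interval_sub_left ((hα i).intervalIntegrable a p.1)
    ((hα i).intervalIntegrable a p.2)
  simp only [Pi.sub_apply, Function.comp_apply]
  linarith

theorem TendstoUniformlyOn.comp_tendstoUniformlyOn {ι β X Y γ : Type*} [UniformSpace β]
    [UniformSpace γ] {G : β → X → γ} {g : X → γ} {s₀ : β} {K : Set X}
    (hG : TendstoUniformlyOn G g (𝓝 s₀) K) {σ : ι → Y → β} {l : Filter ι} {S : Set Y}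
    (hσ : TendstoUniformlyOn σ (fun _ => s₀) l S) {π : Y → X} (hπ : MapsTo π S K) :
    TendstoUniformlyOn (fun n y => G (σ n y) (π y)) (fun y => g (π y)) l S := by
  rw [tendstoUniformlyOn_iff_tendsto] at hG hσ ⊢
  have hσ' : Tendsto (fun q : ι × Y => σ q.1 q.2) (l ×ˢ 𝓟 S) (𝓝 s₀) :=
    Uniform.tendsto_nhds_right.mpr hσ
  have hπ' : Tendsto (fun q : ι × Y => π q.2) (l ×ˢ 𝓟 S) (𝓟 K) :=
    (tendsto_principal_principal.mpr hπ).comp tendsto_snd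
  exact hG.comp (hσ'.prodMk hπ')

theorem dist_apply_eq_dist_apply_sub {𝕜 E : Type*} [NontriviallyNormedField 𝕜]
    [SeminormedAddCommGroup E] [NormedSpace 𝕜 E] {Φ : ℝ → E →L[𝕜] E}
    (hgrp : ∀ s t, Φ (s + t) = (Φ s).comp (Φ t)) (hiso : ∀ t u, ‖Φ t u‖ = ‖u‖)
    (s t : ℝ) (u : E) : dist (Φ s u) (Φ t u) = dist (Φ 0 u) (Φ (t - s) u) := by
  have hs : Φ s u = Φ s (Φ 0 u) := by simpa using congrArg (· u) (hgrp s 0)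
  have ht : Φ t u = Φ s (Φ (t - s) u) := by simpa using congrArg (· u) (hgrp s (t - s))
  rw [hs, ht, dist_eq_norm, dist_eq_norm, ← map_sub, hiso]

theorem stmt5_general {H : Type*} [NormedAddCommGroup H] [InnerProductSpace ℂ H]
    (Φ : ℝ → H →L[ℂ] H)
    (hgrp : ∀ s t : ℝ, Φ (s + t) = (Φ s).comp (Φ t))
    (hiso : ∀ (t : ℝ) (u : H), ‖Φ t u‖ = ‖u‖)
    (hcont : ∀ u : H, Continuous fun t => Φ t u)
    (a b : ℝ) (v : ℝ → H) (hv : ContinuousOn v (Icc a b))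
    (αs : ℕ → ℝ → ℝ)
    (hαs : ∀ n, LocallyIntegrable (αs n) volume)
    (hweak : ∀ c d : ℝ, ∀ θ : ℝ → ℝ, ContinuousOn θ (Icc c d) →
      Tendsto (fun n => ∫ t in Icc c d, αs n t * θ t) atTop
        (nhds (∫ t in Icc c d, θ t)))
    (αbar : ℝ → ℝ) (hαbar : LocallyIntegrable αbar volume)
    (hdom : ∀ n, ∀ᵐ t ∂volume, |αs n t| ≤ αbar t) :
    TendstoUniformlyOn
      (fun n (p : ℝ × ℝ) => Φ (∫ s in p.2..p.1, αs n s) (v p.2))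
      (fun p => Φ (p.1 - p.2) (v p.2)) atTop (Icc a b ×ˢ Icc a b) := by
  have hpt : ∀ x ∈ Icc a b, Tendsto (fun n => ∫ s in a..x, αs n s) atTop (𝓝 (x - a)) := by
    intro x hx
    simpa [intervalIntegral.integral_of_le hx.1, integral_Icc_eq_integral_Ioc, hx.1]
      using hweak a x (fun _ => 1) continuousOn_const
  have hσ := tendstoUniformlyOn_integral_sub_of_dominated hαs hαbar hdom isCompact_Icc hpt
  have hΦ : TendstoUniformlyOn (fun s t => Φ s (v t)) (fun t => Φ 0 (v t)) (𝓝 0) (Icc a b) :=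
    ((ContinuousLinearMap.tendstoUniformlyOn_of_norm_apply_le (fun t u => (hiso t u).le) hcont 0
      (isCompact_Icc.image_of_continuousOn hv)).comp v).mono (subset_preimage_image v _)
  have hcomp := hΦ.comp_tendstoUniformlyOn hσ fun p hp => hp.2
  rw [Metric.tendstoUniformlyOn_iff] at hcomp ⊢
  intro ε hε
  filter_upwards [hcomp ε hε] with n hn p hp
  rw [dist_apply_eq_dist_apply_sub hgrp hiso]
  exact hn p hp

/-- Let `Φ` be a strongly continuous one-parameter unitary group on a
complex Hilbert space `H`, `I = [a,b]` a compact interval, `v ∈ C(I, H)`, and `αs n ⇀ 1`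
weakly with `|αs n| ≤ ᾱ` a.e. for a locally integrable `ᾱ`. With
`τₙ(t,t') = ∫_{t'}^t αs n`, the maps `(t,t') ↦ Φ(τₙ(t,t')) v(t')` converge uniformly on
`I × I` to `(t,t') ↦ Φ(t - t') v(t')`. -/
theorem stmt5 {H : Type*} [NormedAddCommGroup H] [InnerProductSpace ℂ H] [CompleteSpace H]
    (Φ : ℝ → H →L[ℂ] H)
    (hΦ0 : Φ 0 = ContinuousLinearMap.id ℂ H)
    (hgrp : ∀ s t : ℝ, Φ (s + t) = (Φ s).comp (Φ t))
    (hiso : ∀ (t : ℝ) (u : H), ‖Φ t u‖ = ‖u‖)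
    (hcont : ∀ u : H, Continuous fun t => Φ t u)
    (a b : ℝ) (v : ℝ → H) (hv : ContinuousOn v (Icc a b))
    (αs : ℕ → ℝ → ℝ)
    (hαs : ∀ n, LocallyIntegrable (αs n) volume)
    (hweak : ∀ c d : ℝ, ∀ θ : ℝ → ℝ, ContinuousOn θ (Icc c d) →
      Tendsto (fun n => ∫ t in Icc c d, αs n t * θ t) atTop
        (nhds (∫ t in Icc c d, θ t)))
    (αbar : ℝ → ℝ) (hαbar : LocallyIntegrable αbar volume)
    (hdom : ∀ n, ∀ᵐ t ∂volume, |αs n t| ≤ αbar t) :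
    TendstoUniformlyOn
      (fun n (p : ℝ × ℝ) => Φ (∫ s in p.2..p.1, αs n s) (v p.2))
      (fun p => Φ (p.1 - p.2) (v p.2)) atTop (Icc a b ×ˢ Icc a b) :=
  stmt5_general Φ hgrp hiso hcont a b v hv αs hαs hweak αbar hαbar hdom
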